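/- arXiv:1604.03154 — 2 statements merged into one kernel-verified Lean document; each statement's English description precedes it below -/
import Mathlib

section
/- If d is a distance on a set X and X is d-complete, then for any topological space Q the set C(Q, X^{F•}) of functions from Q to X that are continuous with respect to the d-finite topology X^{F•} is sup-d-complete: every sup-d-Cauchy net in C(Q, X^{F•}) has a →^◦_◦-limit (with respect to sup-d, holes tested against all functions Q → X) lying in C(Q, X^{F•}). -/
open TopologicalSpace ENNReal

/-- A (possibly non-reflexive) transitive relation, used to index nets. -/
def TransRel {ι : Type} (r : ι → ι → Prop) : Prop := ∀ a b c, r a b → r b c → r a c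

/-- Directedness of the index relation of a net. -/
def DirRel {ι : Type} (r : ι → ι → Prop) : Prop := ∀ a b, ∃ c, r a c ∧ r b c

/-- `liminf` of a net of extended nonnegative reals over a directed index:
`sup_γ inf_{γ ≺ δ} a δ`. -/
noncomputable def liminfN {ι : Type} (r : ι → ι → Prop) (a : ι → ℝ≥0∞) : ℝ≥0∞ :=
  ⨆ γ, ⨅ δ, ⨅ _ : r γ δ, a δ

/-- `limsup` of a net of extended nonnegative reals over a directed index:
`inf_γ sup_{γ ≺ δ} a δ`. -/
noncomputable def limsupN {ι : Type} (r : ι → ι → Prop) (a : ι → ℝ≥0∞) : ℝ≥0∞ :=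
  ⨅ γ, ⨆ δ, ⨆ _ : r γ δ, a δ

/-- Convergence of a net in `ℝ≥0∞` to `L`. -/
def TendstoN {ι : Type} (r : ι → ι → Prop) (a : ι → ℝ≥0∞) (L : ℝ≥0∞) : Prop :=
  liminfN r a = L ∧ limsupN r a = L

/-- Convergence of a real-valued net. -/
def TendstoRN {ι : Type} (r : ι → ι → Prop) (a : ι → ℝ) (L : ℝ) : Prop :=
  ∀ ε : ℝ, 0 < ε → ∃ γ₀, ∀ γ, r γ₀ γ → |a γ - L| < ε

/-- A distance: a `[0,∞]`-valued function satisfying the triangle inequality. -/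
def IsDistance {X : Type} (d : X → X → ℝ≥0∞) : Prop :=
  ∀ x y z, d x z ≤ d x y + d y z

/-- `d`-Cauchy net: `lim_γ sup_{γ ≺ δ} d(x_γ, x_δ) = 0`. -/
def DCauchyN {ι X : Type} (r : ι → ι → Prop) (d : X → X → ℝ≥0∞) (x : ι → X) : Prop :=
  ∀ ε : ℝ≥0∞, 0 < ε → ∃ γ₀, ∀ γ δ, r γ₀ γ → r γ δ → d (x γ) (x δ) < ε

/-- `d`-dominating net: `sup_γ lim_{γ ≺ δ} d(x_γ, x_δ) = 0`. -/
def DDomN {ι X : Type} (r : ι → ι → Prop) (d : X → X → ℝ≥0∞) (x : ι → X) : Prop :=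
  ∀ γ, ∀ ε : ℝ≥0∞, 0 < ε → ∃ δ₀, r γ δ₀ ∧ ∀ δ, r δ₀ δ → d (x γ) (x δ) < ε

/-- `x_λ →^◦ l` with holes tested against points of `T`:
`liminf_λ d(x_λ, c) ≥ d(l, c)` for all `c ∈ T`. -/
def UpperConvOn {ι X : Type} (r : ι → ι → Prop) (d : X → X → ℝ≥0∞) (T : Set X)
    (x : ι → X) (l : X) : Prop :=
  ∀ c ∈ T, d l c ≤ liminfN r fun γ => d (x γ) c

/-- `x_λ →_◦ l` with holes tested against points of `T`:
`liminf_λ d(c, x_λ) ≥ d(c, l)` for all `c ∈ T`. -/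
def LowerConvOn {ι X : Type} (r : ι → ι → Prop) (d : X → X → ℝ≥0∞) (T : Set X)
    (x : ι → X) (l : X) : Prop :=
  ∀ c ∈ T, d c l ≤ liminfN r fun γ => d c (x γ)

/-- `x_λ →^◦_◦ l` with holes tested against points of `T`. -/
def BiConvOn {ι X : Type} (r : ι → ι → Prop) (d : X → X → ℝ≥0∞) (T : Set X)
    (x : ι → X) (l : X) : Prop :=
  UpperConvOn r d T x l ∧ LowerConvOn r d T x l

/-- The supremum distance on functions `Q → X`. -/
noncomputable def supD {Q X : Type} (d : X → X → ℝ≥0∞) (f g : Q → X) : ℝ≥0∞ :=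
  ⨆ p, d (f p) (g p)

/-- The upper ball topology `X^•`, generated by the balls `{x | d c x < ε}`. -/
def upperBallTop {X : Type} (d : X → X → ℝ≥0∞) : TopologicalSpace X :=
  TopologicalSpace.generateFrom {s | ∃ c, ∃ ε : ℝ≥0∞, 0 < ε ∧ s = {x | d c x < ε}}

/-- The lower ball topology `X_•`, generated by the balls `{x | d x c < ε}`. -/
def lowerBallTop {X : Type} (d : X → X → ℝ≥0∞) : TopologicalSpace X :=
  TopologicalSpace.generateFrom {s | ∃ c, ∃ ε : ℝ≥0∞, 0 < ε ∧ s = {x | d x c < ε}}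

/-- `X` is `d`-complete: every `d`-Cauchy net has a `→^◦_◦`-limit. -/
def DComplete {X : Type} (d : X → X → ℝ≥0∞) : Prop :=
  ∀ (ι : Type) (r : ι → ι → Prop) (x : ι → X), Nonempty ι → TransRel r → DirRel r →
    DCauchyN r d x → ∃ l, BiConvOn r d Set.univ x l

/-- `y` is `d`-finite: `d(y, x_λ) → d(y, l)` whenever `(x_λ)` is `d`-Cauchy and
`x_λ →^◦_◦ l`. -/
def DFinite {X : Type} (d : X → X → ℝ≥0∞) (y : X) : Prop :=
  ∀ (ι : Type) (r : ι → ι → Prop) (x : ι → X) (l : X), Nonempty ι → TransRel r → DirRel r →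
    DCauchyN r d x → BiConvOn r d Set.univ x l →
      TendstoN r (fun γ => d y (x γ)) (d y l)

/-- The `d`-finite topology `X^{F•}`, generated by upper balls with `d`-finite centres. -/
def dFiniteTop {X : Type} (d : X → X → ℝ≥0∞) : TopologicalSpace X :=
  TopologicalSpace.generateFrom
    {s | ∃ c, DFinite d c ∧ ∃ ε : ℝ≥0∞, 0 < ε ∧ s = {x | d c x < ε}}

/-!
The limit `g` is taken pointwise, using `d`-completeness of `X`; `sup-d` convergence then
follows by taking suprema over `Q`. Continuity of `g` for `X^{F•}` means that `p ↦ d(c, g p)` is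
upper semicontinuous for every `d`-finite `c`. For `γ` late in the net, the upper semicontinuous
function `p ↦ d(c, f γ p)` bounds it from above up to `η` uniformly in `p` (the Cauchy tail passes
to the `→_◦`-limit), and `d`-finiteness of `c` makes this bound sharp up to `η` at a chosen point.
-/

open Topology

lemma liminfN_mono {ι : Type} {r : ι → ι → Prop} {a b : ι → ℝ≥0∞}
    (h : ∀ γ, a γ ≤ b γ) : liminfN r a ≤ liminfN r b :=
  iSup_mono fun _ => iInf_mono fun δ => iInf_mono fun _ => h δ

lemma liminfN_le_of_tail {ι : Type} {r : ι → ι → Prop} (hdir : DirRel r)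
    {a : ι → ℝ≥0∞} {γ : ι} {M : ℝ≥0∞} (h : ∀ δ, r γ δ → a δ ≤ M) :
    liminfN r a ≤ M := by
  refine iSup_le fun β => ?_
  obtain ⟨δ, hβδ, hγδ⟩ := hdir β γ
  exact (iInf₂_le δ hβδ).trans (h δ hγδ)

lemma exists_forall_lt_of_limsupN_lt {ι : Type} {r : ι → ι → Prop} {a : ι → ℝ≥0∞}
    {M : ℝ≥0∞} (h : limsupN r a < M) : ∃ β, ∀ δ, r β δ → a δ < M := by
  obtain ⟨β, hβ⟩ := iInf_lt_iff.mp h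
  exact ⟨β, fun δ hβδ => (le_iSup₂ (f := fun δ (_ : r β δ) => a δ) δ hβδ).trans_lt hβ⟩

lemma le_supD {Q X : Type} (d : X → X → ℝ≥0∞) (f g : Q → X) (p : Q) :
    d (f p) (g p) ≤ supD d f g :=
  le_iSup (fun q => d (f q) (g q)) p

lemma DCauchyN.eval {ι Q X : Type} {r : ι → ι → Prop} {d : X → X → ℝ≥0∞} {f : ι → Q → X}
    (hC : DCauchyN r (supD d) f) (p : Q) : DCauchyN r d fun γ => f γ p := by
  intro ε hε
  obtain ⟨γ₀, h⟩ := hC ε hε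
  exact ⟨γ₀, fun γ δ hγ hδ => (le_supD d _ _ p).trans_lt (h γ δ hγ hδ)⟩

lemma biConvOn_supD_of_forall {ι Q X : Type} {r : ι → ι → Prop} {d : X → X → ℝ≥0∞}
    {f : ι → Q → X} {g : Q → X} (h : ∀ p, BiConvOn r d Set.univ (fun γ => f γ p) (g p)) :
    BiConvOn r (supD d) Set.univ f g := by
  refine ⟨fun c _ => iSup_le fun p => ?_, fun c _ => iSup_le fun p => ?_⟩
  · exact ((h p).1 (c p) trivial).trans (liminfN_mono fun γ => le_supD d (f γ) c p)
  · exact ((h p).2 (c p) trivial).trans (liminfN_mono fun γ => le_supD d c (f γ) p)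

lemma LowerConvOn.le_add_of_tail {ι X : Type} {r : ι → ι → Prop} {d : X → X → ℝ≥0∞}
    (hd : IsDistance d) (hdir : DirRel r) {x : ι → X} {l : X}
    (hl : LowerConvOn r d Set.univ x l) {γ : ι} {η : ℝ≥0∞}
    (htail : ∀ δ, r γ δ → d (x γ) (x δ) ≤ η) (c : X) : d c l ≤ d c (x γ) + η :=
  (hl c trivial).trans <| liminfN_le_of_tail hdir fun δ hγδ =>
    (hd c (x γ) (x δ)).trans (by gcongr; exact htail δ hγδ)

lemma continuous_dFiniteTop_iff {Q X : Type} [TopologicalSpace Q] {d : X → X → ℝ≥0∞}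
    {g : Q → X} :
    Continuous[_, dFiniteTop d] g ↔ ∀ c, DFinite d c → UpperSemicontinuous fun p => d c (g p) := by
  rw [dFiniteTop, continuous_generateFrom_iff]
  simp only [upperSemicontinuous_iff_isOpen_preimage]
  constructor
  · intro h c hc ε
    rcases eq_zero_or_pos ε with rfl | hε
    · simp
    · exact h _ ⟨c, hc, ε, hε, rfl⟩
  · rintro h _ ⟨c, hc, ε, -, rfl⟩
    exact h c hc ε

lemma exists_pos_add_add_lt {a y : ℝ≥0∞} (h : a < y) :
    ∃ η : ℝ≥0∞, 0 < η ∧ η ≠ ⊤ ∧ a + η + η < y := by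
  obtain ⟨r, hr, hay⟩ := ENNReal.lt_iff_exists_add_pos_lt.mp h
  refine ⟨r / 2, ENNReal.half_pos (by exact_mod_cast hr.ne'),
    ENNReal.div_ne_top ENNReal.coe_ne_top two_ne_zero, ?_⟩
  rwa [add_assoc, ENNReal.add_halves]

lemma upperSemicontinuous_of_forall_approx {Q : Type} [TopologicalSpace Q] {F : Q → ℝ≥0∞}
    (happrox : ∀ p₀, F p₀ ≠ ⊤ → ∀ η, 0 < η → ∃ G : Q → ℝ≥0∞,
      UpperSemicontinuous G ∧ G p₀ < F p₀ + η ∧ ∀ p, F p ≤ G p + η) :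
    UpperSemicontinuous F := by
  intro p₀ y hy
  obtain ⟨η, hη, hηtop, hlt⟩ := exists_pos_add_add_lt hy
  obtain ⟨G, hG, hGp₀, hFG⟩ := happrox p₀ (hy.trans_le le_top).ne η hη
  filter_upwards [hG p₀ _ hGp₀] with p hp
  calc F p ≤ G p + η := hFG p
    _ < F p₀ + η + η := ENNReal.add_lt_add_right hηtop hp
    _ < y := hlt

lemma continuous_dFiniteTop_of_pointwise_limit {ι Q X : Type} [TopologicalSpace Q]
    {d : X → X → ℝ≥0∞} (hd : IsDistance d) {r : ι → ι → Prop} (hne : Nonempty ι)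
    (htr : TransRel r) (hdir : DirRel r) {f : ι → Q → X}
    (hf : ∀ i, Continuous[_, dFiniteTop d] (f i)) (hC : DCauchyN r (supD d) f) {g : Q → X}
    (hg : ∀ p, BiConvOn r d Set.univ (fun γ => f γ p) (g p)) :
    Continuous[_, dFiniteTop d] g := by
  refine continuous_dFiniteTop_iff.mpr fun c hc => upperSemicontinuous_of_forall_approx ?_
  intro p₀ hfin η hη
  obtain ⟨γ₀, hγ₀⟩ := hC η hη
  have hlim := (hc ι r (fun δ => f δ p₀) (g p₀) hne htr hdir (hC.eval p₀) (hg p₀)).2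
  obtain ⟨β, hβ⟩ := exists_forall_lt_of_limsupN_lt (M := d c (g p₀) + η) <| by
    rw [hlim]
    exact ENNReal.lt_add_right hfin hη.ne'
  obtain ⟨γ, hγ₀γ, hβγ⟩ := hdir γ₀ β
  refine ⟨fun p => d c (f γ p), continuous_dFiniteTop_iff.mp (hf γ) c hc, hβ γ hβγ,
    fun p => (hg p).2.le_add_of_tail hd hdir (fun δ hγδ => ?_) c⟩
  exact (le_supD d _ _ p).trans (hγ₀ γ δ hγ₀γ hγδ).le

/-- if `X` is `d`-complete, then `C(Q, X^{F•})` is `sup-d`-complete: every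
`sup-d`-Cauchy net of functions continuous for the `d`-finite topology has a
`→^◦_◦`-limit which is continuous for the `d`-finite topology. -/
theorem stmt3 {X Q ι : Type} [TopologicalSpace Q]
    (d : X → X → ℝ≥0∞) (hd : IsDistance d) (hcomp : DComplete d)
    (r : ι → ι → Prop) (hne : Nonempty ι) (htr : TransRel r) (hdir : DirRel r)
    (f : ι → Q → X) (hf : ∀ i, @Continuous Q X _ (dFiniteTop d) (f i))
    (hC : DCauchyN r (supD d) f) :
    ∃ g : Q → X, @Continuous Q X _ (dFiniteTop d) g ∧
      BiConvOn r (supD d) Set.univ f g := by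
  choose g hg using fun p => hcomp ι r (fun γ => f γ p) hne htr hdir (hC.eval p)
  exact ⟨g, continuous_dFiniteTop_of_pointwise_limit hd hne htr hdir hf hC hg,
    biConvOn_supD_of_forall hg⟩
end

section
/- Let X be a preordered Banach space that is norm-separable. Then X^C = X^σ: an element x ∈ X** is the →^◦_◦-limit of a d-Cauchy net with terms in X if and only if it is the →^◦_◦-limit of a ≤-increasing sequence with terms in X. -/
open TopologicalSpace ENNReal

/-- The bidual `X**` of a real normed space. -/
abbrev Bidual (X : Type) [NormedAddCommGroup X] [NormedSpace ℝ X] : Type :=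
  StrongDual ℝ (StrongDual ℝ X)

/-- The positive cone of a preordered Banach space: a norm-closed set containing `0`,
closed under nonnegative scaling and addition. -/
def IsGoodCone (X : Type) [NormedAddCommGroup X] [NormedSpace ℝ X] (K : Set X) : Prop :=
  IsClosed K ∧ (0 : X) ∈ K ∧ (∀ r : ℝ, 0 ≤ r → ∀ x ∈ K, r • x ∈ K) ∧
    ∀ x ∈ K, ∀ y ∈ K, x + y ∈ K

/-- `Q = X^{*1}_+`, the positive unit ball of the dual. -/
def posQ (X : Type) [NormedAddCommGroup X] [NormedSpace ℝ X] (K : Set X) :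
    Set (StrongDual ℝ X) :=
  {φ | ‖φ‖ ≤ 1 ∧ ∀ v ∈ K, 0 ≤ φ v}

/-- The canonical hemimetric on `X**`: `d(x,y) = ‖x - y‖_≤ = sup_{φ ∈ Q} φ(x - y)`. -/
noncomputable def ddist {X : Type} [NormedAddCommGroup X] [NormedSpace ℝ X] (K : Set X)
    (x y : Bidual X) : ℝ≥0∞ :=
  ⨆ φ ∈ posQ X K, ENNReal.ofReal ((x - y) φ)

/-- The weak* topology on `Q = X^{*1}_+`. -/
def qTop (X : Type) [NormedAddCommGroup X] [NormedSpace ℝ X] (K : Set X) :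
    TopologicalSpace (posQ X K) :=
  TopologicalSpace.induced (fun φ : posQ X K => fun v : X => φ.1 v) inferInstance

/-- `x ∈ X^S`: the restriction of `x ∈ X**` to `Q` is weak* lower semicontinuous. -/
def lscS {X : Type} [NormedAddCommGroup X] [NormedSpace ℝ X] (K : Set X)
    (x : Bidual X) : Prop :=
  @LowerSemicontinuous (posQ X K) ℝ (qTop X K) _ fun φ => x φ.1

/-- `B^{<∞}`: the bounded functions `Q → X**`. -/
def Bset (X : Type) [NormedAddCommGroup X] [NormedSpace ℝ X] (Q : Type) :
    Set (Q → Bidual X) := {f | ∃ M, ∀ p, ‖f p‖ ≤ M}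

/-- The upper ball topology on `X^S`, generated by the balls
`{y | d(c, y) < ε}` for `c ∈ X^S`. -/
def upTopXS {X : Type} [NormedAddCommGroup X] [NormedSpace ℝ X] (K : Set X) :
    TopologicalSpace {x : Bidual X // lscS K x} :=
  TopologicalSpace.generateFrom
    {s | ∃ c : {x : Bidual X // lscS K x}, ∃ ε : ℝ≥0∞, 0 < ε ∧ s = {y | ddist K c.1 y.1 < ε}}

/-- `f ∈ S`: a bounded function `Q → X**` taking values in `X^S` that is continuous
into `X^S` with its upper ball topology. -/
def MemS {X : Type} [NormedAddCommGroup X] [NormedSpace ℝ X] (K : Set X)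
    {Q : Type} [TopologicalSpace Q] (f : Q → Bidual X) : Prop :=
  f ∈ Bset X Q ∧ ∃ h : ∀ p, lscS K (f p),
    @Continuous Q {x : Bidual X // lscS K x} _ (upTopXS K) fun p => ⟨f p, h p⟩

/-!
Choose indices `γ_m` along the `d`-Cauchy net so that `w_m = y_{γ_m}` satisfies
`d(w_m, y_δ) ≤ 2^{-m}` beyond `γ_m`. Separability gives, for each Cauchy tail, countably many
indices whose images are norm-dense in it; letting the chain `γ_m` pass all of them puts a point of
every tail of `y` eventually below `(w_m)` up to any `ε`, so `w` inherits the upper limit `x`.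
By Hahn–Banach, `d(a, b) ≤ t` puts `b - a` within distance `t` of the cone, so the increments
`w_{m+1} - w_m` are summably close to cone elements `u_m`. Absorbing the errors into a convergent
tail gives an increasing `z` with `‖z_m - w_m‖ → 0`. Since `d(w_m, x) ≤ 2^{-m}`, each `z_n` lies
below `x`, which yields the lower limit, while the upper limit passes from `w` to `z`.
-/

open Filter Topology

section Hemimetric

variable {α ι : Type} {d : α → α → ℝ≥0∞}

/-- Each tail of the net `y` has a point lying, up to any `ε`, eventually below the sequence `z`. -/
def SeqDominatesNet (r : ι → ι → Prop) (d : α → α → ℝ≥0∞) (y : ι → α) (z : ℕ → α) : Prop :=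
  ∀ γ, ∀ ε : ℝ≥0∞, 0 < ε → ∃ δ, r γ δ ∧ ∀ᶠ m in atTop, d (y δ) (z m) ≤ ε

lemma SeqDominatesNet.of_tendsto {r : ι → ι → Prop} {y : ι → α} {w z : ℕ → α}
    (hd : IsDistance d) (h : SeqDominatesNet r d y w)
    (hwz : Tendsto (fun m => d (w m) (z m)) atTop (𝓝 0)) : SeqDominatesNet r d y z := by
  intro γ ε hε
  obtain ⟨δ, hγδ, hδ⟩ := h γ (ε / 2) (ENNReal.half_pos hε.ne')
  refine ⟨δ, hγδ, ?_⟩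
  filter_upwards [hδ, hwz.eventually_le_const (ENNReal.half_pos hε.ne')] with m h₁ h₂
  calc d (y δ) (z m) ≤ d (y δ) (w m) + d (w m) (z m) := hd _ _ _
    _ ≤ ε / 2 + ε / 2 := add_le_add h₁ h₂
    _ = ε := ENNReal.add_halves ε

lemma SeqDominatesNet.liminfN_le {r : ι → ι → Prop} {y : ι → α} {z : ℕ → α}
    (hd : IsDistance d) (h : SeqDominatesNet r d y z) (c : α) :
    liminfN r (fun γ => d (y γ) c) ≤ liminfN (· ≤ ·) (fun m => d (z m) c) := by
  refine iSup_le fun γ => ENNReal.le_of_forall_pos_le_add fun ε hε _ => ?_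
  obtain ⟨δ, hγδ, hδ⟩ := h γ ε (ENNReal.coe_pos.2 hε)
  obtain ⟨N, hN⟩ := eventually_atTop.1 hδ
  have hyδ : d (y δ) c - ε ≤ ⨅ m, ⨅ _ : N ≤ m, d (z m) c :=
    le_iInf₂ fun m hm => tsub_le_iff_right.2 <|
      (hd _ (z m) _).trans (by rw [add_comm]; gcongr; exact hN m hm)
  calc ⨅ δ', ⨅ _ : r γ δ', d (y δ') c ≤ d (y δ) c := iInf₂_le δ hγδ
    _ ≤ (⨅ m, ⨅ _ : N ≤ m, d (z m) c) + ε := tsub_le_iff_right.1 hyδ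
    _ ≤ liminfN (· ≤ ·) (fun m => d (z m) c) + ε := by
      gcongr; exact le_iSup (fun n => ⨅ m, ⨅ _ : n ≤ m, d (z m) c) N

lemma SeqDominatesNet.upperConvOn {r : ι → ι → Prop} {y : ι → α} {z : ℕ → α} {T : Set α}
    {l : α} (hd : IsDistance d) (h : SeqDominatesNet r d y z) (hy : UpperConvOn r d T y l) :
    UpperConvOn (· ≤ ·) d T z l :=
  fun c hc => (hy c hc).trans (h.liminfN_le hd c)

lemma dist_le_of_lowerConvOn {r : ι → ι → Prop} {y : ι → α} {T : Set α} {l : α}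
    (hdir : DirRel r) (hy : LowerConvOn r d T y l) {δ : ι} (hδ : y δ ∈ T) {ε : ℝ≥0∞}
    (h : ∀ δ', r δ δ' → d (y δ) (y δ') ≤ ε) : d (y δ) l ≤ ε := by
  refine (hy _ hδ).trans (iSup_le fun γ => ?_)
  obtain ⟨δ', hγ, hδ'⟩ := hdir γ δ
  exact (iInf₂_le δ' hγ).trans (h δ' hδ')

lemma dist_eq_zero_of_tendsto {z : ℕ → α} {l : α} (hd : IsDistance d)
    (hz : ∀ n m, n ≤ m → d (z n) (z m) = 0) (hl : Tendsto (fun m => d (z m) l) atTop (𝓝 0))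
    (n : ℕ) : d (z n) l = 0 :=
  nonpos_iff_eq_zero.1 <| ge_of_tendsto hl <| eventually_atTop.2 ⟨n, fun m hm =>
    (hd _ (z m) _).trans_eq (by rw [hz n m hm, zero_add])⟩

lemma lowerConvOn_of_dist_eq_zero [Nonempty ι] {r : ι → ι → Prop} {z : ι → α} {T : Set α}
    {l : α} (hd : IsDistance d) (hz : ∀ i, d (z i) l = 0) : LowerConvOn r d T z l :=
  fun c _ => le_iSup_of_le (Classical.arbitrary ι) <| le_iInf₂ fun i _ =>
    (hd c (z i) l).trans_eq (by rw [hz i, add_zero])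

end Hemimetric

lemma exists_chain_above {ι : Type} {r : ι → ι → Prop} (htrans : TransRel r) (hdir : DirRel r)
    (a : ℕ → ι) : ∃ c : ℕ → ι, (∀ m, r (c m) (c (m + 1))) ∧ ∀ t m, t ≤ m → r (a t) (c m) := by
  choose ub hub₁ hub₂ using hdir
  let c : ℕ → ι := fun m => Nat.rec (ub (a 0) (a 0)) (fun m cm => ub cm (a (m + 1))) m
  have hstep : ∀ m, r (c m) (c (m + 1)) := fun m => hub₁ _ _
  have hdiag : ∀ m, r (a m) (c m) := by
    rintro (_ | m)
    exacts [hub₁ _ _, hub₂ _ _]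
  refine ⟨c, hstep, fun t m htm => ?_⟩
  induction m, htm using Nat.le_induction with
  | base => exact hdiag t
  | succ m _ ih => exact htrans _ _ _ ih (hstep m)

lemma exists_seq_dense_image {ι X : Type} [PseudoEMetricSpace X] [SeparableSpace X]
    (y : ι → X) {s : Set ι} (hs : s.Nonempty) :
    ∃ D : ℕ → ι, (∀ n, D n ∈ s) ∧ ∀ γ ∈ s, ∀ ε > 0, ∃ n, edist (y (D n)) (y γ) < ε := by
  have : SeparableSpace (y '' s) :=
    (TopologicalSpace.IsSeparable.of_separableSpace _).separableSpace
  have : Nonempty (y '' s) := (hs.image y).to_subtype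
  obtain ⟨v, hv⟩ := TopologicalSpace.exists_dense_seq (y '' s)
  choose D hDs hD using fun n => (v n).2
  refine ⟨D, hDs, fun γ hγ ε hε => ?_⟩
  obtain ⟨_, ⟨n, rfl⟩, hn⟩ := EMetric.mem_closure_iff.1 (hv ⟨y γ, γ, hγ, rfl⟩) ε hε
  exact ⟨n, by rw [hD, edist_comm]; exact hn⟩

lemma exists_succ_sub_eq_of_summable {E : Type} [NormedAddCommGroup E] [CompleteSpace E]
    (w u : ℕ → E) (h : Summable fun m => ‖w (m + 1) - w m - u m‖) :
    ∃ z : ℕ → E, (∀ m, z (m + 1) - z m = u m) ∧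
      Tendsto (fun m => edist (w m) (z m)) atTop (𝓝 0) := by
  set e : ℕ → E := fun m => w (m + 1) - w m - u m
  refine ⟨fun m => w m + (∑' i, e i - ∑ i ∈ Finset.range m, e i), fun m => ?_, ?_⟩
  · simp only [Finset.sum_range_succ, e]
    abel
  · refine (tendsto_iff_edist_tendsto_0.1 h.of_norm.hasSum.tendsto_sum_nat).congr fun m => ?_
    rw [edist_dist, edist_dist, dist_eq_norm, dist_eq_norm]
    congr 2
    rw [sub_add_cancel_left, neg_sub]

lemma exists_dominating_subseq {ι X : Type} [PseudoEMetricSpace X] [SeparableSpace X]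
    {d : X → X → ℝ≥0∞} (hd : IsDistance d) (hle : ∀ a b, d a b ≤ edist a b)
    {r : ι → ι → Prop} {y : ι → X} (htrans : TransRel r) (hdir : DirRel r)
    (hy : DCauchyN r d y) :
    ∃ c : ℕ → ι, (∀ m, r (c m) (c (m + 1))) ∧
      (∀ m δ, r (c m) δ → d (y (c m)) (y δ) ≤ 2⁻¹ ^ m) ∧ SeqDominatesNet r d y (y ∘ c) := by
  choose g hg using fun k : ℕ => hy (2⁻¹ ^ k) (ENNReal.pow_pos (by simp) k)
  have hne : ∀ k, {γ | r (g k) γ}.Nonempty := fun k =>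
    let ⟨γ, hγ, _⟩ := hdir (g k) (g k); ⟨γ, hγ⟩
  choose D hDg hD using fun k => exists_seq_dense_image y (hne k)
  -- Through `Nat.unpair`, the chain `c` eventually passes beyond every `D k n`.
  choose a hga hDa using fun t : ℕ => hdir (g t) (D t.unpair.1 t.unpair.2)
  obtain ⟨c, hstep, hc⟩ := exists_chain_above htrans hdir a
  refine ⟨c, hstep, fun m δ hδ =>
    (hg m _ _ (htrans _ _ _ (hga m) (hc m m le_rfl)) hδ).le, fun γ ε hε => ?_⟩
  obtain ⟨k, hk⟩ := ENNReal.exists_inv_two_pow_lt (ENNReal.half_pos hε.ne').ne'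
  obtain ⟨δ, hγδ, hkδ⟩ := hdir γ (g k)
  obtain ⟨n, hn⟩ := hD k δ hkδ (ε / 2) (ENNReal.half_pos hε.ne')
  refine ⟨δ, hγδ, eventually_atTop.2 ⟨Nat.pair k n, fun m hm => ?_⟩⟩
  have hDc : r (D k n) (c m) := htrans _ _ _ (by simpa using hDa (Nat.pair k n)) (hc _ m hm)
  calc d (y δ) (y (c m)) ≤ d (y δ) (y (D k n)) + d (y (D k n)) (y (c m)) := hd _ _ _
    _ ≤ ε / 2 + ε / 2 := add_le_add ((hle _ _).trans (edist_comm (y δ) _ ▸ hn.le))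
        ((hg k _ _ (hDg k n) hDc).le.trans hk.le)
    _ = ε := ENNReal.add_halves ε

section Banach

variable {X : Type} [NormedAddCommGroup X] [NormedSpace ℝ X] {K : Set X}

local notation "J" => NormedSpace.inclusionInDoubleDual ℝ X

lemma IsGoodCone.convex (hK : IsGoodCone X K) : Convex ℝ K :=
  fun _ hp _ hq a b ha hb _ => hK.2.2.2 _ (hK.2.2.1 a ha _ hp) _ (hK.2.2.1 b hb _ hq)

lemma IsGoodCone.sub_mem_of_le (hK : IsGoodCone X K) {z : ℕ → X}
    (hz : ∀ m, z (m + 1) - z m ∈ K) {n m : ℕ} (hnm : n ≤ m) : z m - z n ∈ K := by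
  induction m, hnm using Nat.le_induction with
  | base => simpa using hK.2.1
  | succ m _ ih => simpa using hK.2.2.2 _ (hz m) _ ih

lemma ofReal_sub_apply_le_ddist {a b : Bidual X} {φ : StrongDual ℝ X} (hφ : φ ∈ posQ X K) :
    ENNReal.ofReal ((a - b) φ) ≤ ddist K a b :=
  le_iSup₂ (f := fun φ (_ : φ ∈ posQ X K) => ENNReal.ofReal ((a - b) φ)) φ hφ

lemma ddist_le_ofReal_iff {a b : Bidual X} {t : ℝ} (ht : 0 ≤ t) :
    ddist K a b ≤ ENNReal.ofReal t ↔ ∀ φ ∈ posQ X K, (a - b) φ ≤ t := by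
  simp only [ddist, iSup₂_le_iff, ENNReal.ofReal_le_ofReal_iff ht]

lemma inclusion_sub_inclusion_apply (a b : X) (φ : StrongDual ℝ X) :
    (J a - J b) φ = φ (a - b) := by
  rw [sub_apply, NormedSpace.dual_def, NormedSpace.dual_def, map_sub]

lemma isDistance_ddist (K : Set X) : IsDistance (ddist K) := fun a b c =>
  iSup₂_le fun φ hφ => by
    have hsplit : (a - c) φ = (a - b) φ + (b - c) φ := by simp
    rw [hsplit]
    exact ENNReal.ofReal_add_le.trans
      (add_le_add (ofReal_sub_apply_le_ddist hφ) (ofReal_sub_apply_le_ddist hφ))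

lemma ddist_inclusion_le_edist (a b : X) : ddist K (J a) (J b) ≤ edist a b := by
  rw [edist_dist, dist_eq_norm]
  refine iSup₂_le fun φ hφ => ENNReal.ofReal_le_ofReal ?_
  rw [inclusion_sub_inclusion_apply]
  exact (le_abs_self _).trans ((φ.le_opNorm _).trans (mul_le_of_le_one_left (norm_nonneg _) hφ.1))

lemma ddist_inclusion_eq_zero {a b : X} (h : b - a ∈ K) : ddist K (J a) (J b) = 0 :=
  nonpos_iff_eq_zero.1 <| ENNReal.ofReal_zero ▸ (ddist_le_ofReal_iff le_rfl).2 fun φ hφ => by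
    rw [inclusion_sub_inclusion_apply, ← neg_sub, map_neg, neg_nonpos]
    exact hφ.2 _ h

lemma infDist_le_of_forall_posQ (hK : IsGoodCone X K) (v : X) {t : ℝ}
    (h : ∀ φ ∈ posQ X K, -t ≤ φ v) : Metric.infDist v K ≤ t := by
  have ht : 0 ≤ t := by simpa using h 0 ⟨by simp, fun _ _ => le_rfl⟩
  by_contra! hR
  obtain ⟨ρ, htρ, hρR⟩ := exists_between hR
  have hρ : 0 < ρ := ht.trans_lt htρ
  have hdisj : Disjoint (Metric.ball v (Metric.infDist v K)) K :=
    Set.disjoint_left.2 fun a ha haK =>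
      (Metric.infDist_le_dist_of_mem haK).not_gt (by rwa [dist_comm, ← Metric.mem_ball])
  obtain ⟨f, s, hball, hcone⟩ :=
    geometric_hahn_banach_open (convex_ball _ _) Metric.isOpen_ball hK.convex hdisj
  have hs : s ≤ 0 := by simpa using hcone 0 hK.2.1
  -- `f` is nonnegative on the cone `K`, since otherwise a large multiple would drop below `s`.
  have hfK : ∀ u ∈ K, 0 ≤ f u := by
    intro u hu
    by_contra! hfu
    have hc : 0 ≤ (s - 1) / f u := div_nonneg_of_nonpos (by linarith) hfu.le
    have := hcone _ (hK.2.2.1 _ hc u hu)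
    rw [map_smul, smul_eq_mul, div_mul_cancel₀ _ hfu.ne] at this
    linarith
  have hfv : f v < 0 := (hball v (Metric.mem_ball_self (hρ.trans hρR))).trans_le hs
  have hbound : ∀ b ∈ Metric.closedBall (0 : X) ρ, ‖f b‖ ≤ -f v := by
    intro b hb
    have hb' : ‖b‖ < Metric.infDist v K := (mem_closedBall_zero_iff.1 hb).trans_lt hρR
    have h₁ := hball (v + b) (by simpa [dist_eq_norm] using hb')
    have h₂ := hball (v - b) (by simpa [dist_eq_norm] using hb')
    rw [map_add] at h₁
    rw [map_sub] at h₂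
    rw [Real.norm_eq_abs, abs_le]
    constructor <;> linarith
  have hf : ‖f‖ ≤ -f v / ρ := f.opNorm_bound_of_ball_bound hρ _ hbound
  have hf₀ : 0 < ‖f‖ := norm_pos_iff.2 fun hf₀ => by simp [hf₀] at hfv
  have hφ : ‖f‖⁻¹ • f ∈ posQ X K := by
    refine ⟨by rw [norm_smul, norm_inv, norm_norm, inv_mul_cancel₀ hf₀.ne'], fun u hu => ?_⟩
    exact mul_nonneg (inv_nonneg.2 hf₀.le) (hfK u hu)
  have := h _ hφ
  rw [smul_apply, smul_eq_mul, le_inv_mul_iff₀ hf₀] at this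
  rw [le_div_iff₀ hρ] at hf
  nlinarith

lemma infDist_sub_le_of_ddist_le (hK : IsGoodCone X K) {a b : X} {t : ℝ} (ht : 0 ≤ t)
    (h : ddist K (J a) (J b) ≤ ENNReal.ofReal t) : Metric.infDist (b - a) K ≤ t :=
  infDist_le_of_forall_posQ hK _ fun φ hφ => by
    have := (ddist_le_ofReal_iff ht).1 h φ hφ
    rw [inclusion_sub_inclusion_apply, ← neg_sub, map_neg] at this
    linarith

lemma exists_monotone_tendsto_edist [CompleteSpace X] (hK : IsGoodCone X K) {w : ℕ → X}
    (hw : ∀ m, ddist K (J (w m)) (J (w (m + 1))) ≤ 2⁻¹ ^ m) :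
    ∃ z : ℕ → X, (∀ n m : ℕ, n ≤ m → z m - z n ∈ K) ∧
      Tendsto (fun m => edist (w m) (z m)) atTop (𝓝 0) := by
  have hu : ∀ m, ∃ u ∈ K, ‖w (m + 1) - w m - u‖ ≤ 2 * (2⁻¹ : ℝ) ^ m := by
    intro m
    have h₁ : ddist K (J (w m)) (J (w (m + 1))) ≤ ENNReal.ofReal ((2⁻¹ : ℝ) ^ m) := by
      rw [ENNReal.ofReal_pow (by norm_num), ENNReal.ofReal_inv_of_pos two_pos,
        ENNReal.ofReal_ofNat]
      exact hw m
    have h₂ := (infDist_sub_le_of_ddist_le hK (by positivity) h₁).trans_lt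
      (lt_two_mul_self (by positivity : (0 : ℝ) < (2⁻¹ : ℝ) ^ m))
    obtain ⟨u, huK, hu⟩ := (Metric.infDist_lt_iff ⟨0, hK.2.1⟩).1 h₂
    exact ⟨u, huK, by rw [← dist_eq_norm]; exact hu.le⟩
  choose u huK hu using hu
  obtain ⟨z, hzu, hwz⟩ := exists_succ_sub_eq_of_summable w u <|
    Summable.of_nonneg_of_le (fun _ => norm_nonneg _) hu
      ((summable_geometric_of_lt_one (by norm_num) (by norm_num)).mul_left 2)
  exact ⟨z, fun n m => hK.sub_mem_of_le fun m => hzu m ▸ huK m, hwz⟩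

theorem exists_monotone_biConvOn_of_dCauchyN [CompleteSpace X] [SeparableSpace X]
    (hK : IsGoodCone X K) {ι : Type} {r : ι → ι → Prop} {y : ι → X} {x : Bidual X}
    (htrans : TransRel r) (hdir : DirRel r) (hy : DCauchyN r (ddist K) (fun i => J (y i)))
    (hx : BiConvOn r (ddist K) Set.univ (fun i => J (y i)) x) :
    ∃ z : ℕ → X, (∀ n m : ℕ, n ≤ m → z m - z n ∈ K) ∧
      BiConvOn (fun n m : ℕ => n ≤ m) (ddist K) Set.univ (fun n => J (z n)) x := by
  have hd := isDistance_ddist K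
  obtain ⟨c, hstep, htail, hdom⟩ := exists_dominating_subseq (d := fun a b => ddist K (J a) (J b))
    (fun _ _ _ => hd _ _ _) ddist_inclusion_le_edist htrans hdir hy
  set w : ℕ → X := fun m => y (c m)
  have hwx : ∀ m, ddist K (J (w m)) x ≤ 2⁻¹ ^ m := fun m =>
    dist_le_of_lowerConvOn hdir hx.2 (Set.mem_univ _) (htail m)
  obtain ⟨z, hzK, hwz⟩ := exists_monotone_tendsto_edist hK fun m => htail m _ (hstep m)
  have hwz' : Tendsto (fun m => ddist K (J (w m)) (J (z m))) atTop (𝓝 0) :=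
    tendsto_of_tendsto_of_tendsto_of_le_of_le tendsto_const_nhds hwz (fun _ => bot_le)
      fun m => ddist_inclusion_le_edist _ _
  have hzx : Tendsto (fun m => ddist K (J (z m)) x) atTop (𝓝 0) := by
    have hpow : Tendsto (fun m => (2⁻¹ : ℝ≥0∞) ^ m) atTop (𝓝 0) :=
      ENNReal.tendsto_pow_atTop_nhds_zero_iff.2 (by norm_num)
    refine tendsto_of_tendsto_of_tendsto_of_le_of_le tendsto_const_nhds
      (by simpa using hwz.add hpow) (fun _ => bot_le) fun m => ?_
    exact (hd _ (J (w m)) _).trans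
      (add_le_add ((ddist_inclusion_le_edist _ _).trans_eq (edist_comm _ _)) (hwx m))
  exact ⟨z, hzK, (hdom.of_tendsto hd hwz').upperConvOn hd hx.1,
    lowerConvOn_of_dist_eq_zero hd
      (dist_eq_zero_of_tendsto hd (fun n m h => ddist_inclusion_eq_zero (hzK n m h)) hzx)⟩

end Banach

/-- if `X` is norm-separable then `X^C = X^σ`: `x ∈ X**` is the
`→^◦_◦`-limit of a `d`-Cauchy net with terms in `X` iff it is the `→^◦_◦`-limit of a
`≤`-increasing sequence with terms in `X`. -/
theorem stmt10 (X : Type) [NormedAddCommGroup X] [NormedSpace ℝ X] [CompleteSpace X]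
    [TopologicalSpace.SeparableSpace X]
    (K : Set X) (hK : IsGoodCone X K) (x : Bidual X) :
    (∃ (ι : Type) (r : ι → ι → Prop) (y : ι → X),
      Nonempty ι ∧ TransRel r ∧ DirRel r ∧
      DCauchyN r (ddist K) (fun i => NormedSpace.inclusionInDoubleDual ℝ X (y i)) ∧
      BiConvOn r (ddist K) Set.univ
        (fun i => NormedSpace.inclusionInDoubleDual ℝ X (y i)) x) ↔
    (∃ y : ℕ → X, (∀ n m : ℕ, n ≤ m → y m - y n ∈ K) ∧
      BiConvOn (fun n m : ℕ => n ≤ m) (ddist K) Set.univ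
        (fun n => NormedSpace.inclusionInDoubleDual ℝ X (y n)) x) := by
  constructor
  · rintro ⟨ι, r, y, -, htrans, hdir, hy, hx⟩
    exact exists_monotone_biConvOn_of_dCauchyN hK htrans hdir hy hx
  · rintro ⟨y, hy, hx⟩
    refine ⟨ℕ, (· ≤ ·), y, ⟨0⟩, fun _ _ _ => le_trans,
      fun a b => ⟨max a b, le_max_left a b, le_max_right a b⟩,
      fun ε hε => ⟨0, fun γ δ _ hγδ => ?_⟩, hx⟩
    rw [ddist_inclusion_eq_zero (hy γ δ hγδ)]
    exact hε
end
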